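/- The ω-language H = [(0²)*·0·A·Σ·(0²)⁺·Σ]^ω over the alphabet Σ ∪ {0,A} satisfies: its topological closure is Cl(H) = H ∪ V·0^ω, where V = Pref(H) ∩ (Σ ∪ {0,A})*·0 is the set of prefixes of words of H ending in the letter 0. -/

import Mathlib

/-- Cumulative concatenation of the first `n` blocks. -/
def cumCat {C : Type*} (b : ℕ → List C) : ℕ → List C
  | 0 => []
  | n + 1 => cumCat b n ++ b n

/-- The infinite word obtained by concatenating the (nonempty) blocks `b 0, b 1, …`. -/
def infCat {C : Type*} (b : ℕ → List C) (d : C) : ℕ → C :=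
  fun i => (cumCat b (i + 1)).getD i d

/-- The length-`n` prefix of an infinite word. -/
def wordPrefix {α : Type*} (x : ℕ → α) (n : ℕ) : List α := List.ofFn fun i : Fin n => x i

/-- `Pref L` is the set of finite prefixes of elements of `L`. -/
def Pref {α : Type*} (L : Set (ℕ → α)) : Set (List α) :=
  {w | ∃ x ∈ L, ∃ n, w = wordPrefix x n}

/-- In the alphabet `Σ ∪ {0, A}` (the letter `0` being `Sum.inr 0` and `A` being
`Sum.inr 1`), a block of `H`: `0^{2k+1}·A·a·0^{2m}·b` with `k ≥ 0`, `m ≥ 1`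
(encoded as `m+1` with `m ≥ 0`), and `a, b ∈ Σ`. -/
def hSetBlock {α : Type*} (k m : ℕ) (a b : α) : List (α ⊕ Fin 2) :=
  List.replicate (2 * k + 1) (Sum.inr 0) ++ [Sum.inr 1, Sum.inl a] ++
    List.replicate (2 * (m + 1)) (Sum.inr 0) ++ [Sum.inl b]

/-- The ω-language `H = [(0²)*·0·A·Σ·(0²)⁺·Σ]^ω`: infinite concatenations of blocks
`0^{2k+1}·A·a·0^{2m}·b` with `k ≥ 0`, `m ≥ 1`, `a, b ∈ Σ`. -/
def Hset (α : Type*) : Set (ℕ → α ⊕ Fin 2) :=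
  {y | ∃ f : ℕ → ℕ × ℕ × α × α,
    y = infCat (fun n => hSetBlock (f n).1 (f n).2.1 (f n).2.2.1 (f n).2.2.2) (Sum.inr 0)}

/-- `V = Pref(H) ∩ (Σ ∪ {0,A})*·0`: the prefixes of words of `H` ending in the
letter `0`. -/
def Vset (α : Type*) : Set (List (α ⊕ Fin 2)) :=
  {w | w ∈ Pref (Hset α) ∧ w.getLast? = some (Sum.inr 0)}

/-- `V·0^ω`: words of `V` continued by infinitely many letters `0`. -/
def VZeroOmega (α : Type*) : Set (ℕ → α ⊕ Fin 2) :=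
  {z | ∃ w ∈ Vset α, z = fun i => w.getD i (Sum.inr 0)}

/-!
The blocks `0^{2k+1}·A·a·0^{2m}·b` of `H` form a prefix code: a block has exactly three letters
other than `0`, and the third one ends it. So if `x ∈ Cl(H)` has infinitely many letters other
than `0`, every word of `H` agreeing with `x` beyond the third such letter starts with the same
block `B`, and `x = B·x'` with `x'` again in `Cl(H)`; peeling off blocks forever shows `x ∈ H`.
If instead `x ∈ Cl(H)` is eventually `0`, then `x = w·0^ω` for a long enough prefix `w` of `x`,
and `w` is a prefix of a word of `H` ending in `0`. Conversely, `w·0^ω ∈ Cl(H)` for `w ∈ V`: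
the last letter of `w` lies in a run of `0`s of some block, and stretching that run (both runs of
a block have unbounded length) gives words of `H` that agree with `w·0^ω` on longer and longer
prefixes.

Infinite words are functions `ℕ → _`; `Stream'` is the same type by definition and provides
`take`, `drop` and `++ₛ`.
-/

open Filter

theorem Stream'.take_eq_take_iff {C : Type*} {s t : Stream' C} {n : ℕ} :
    s.take n = t.take n ↔ ∀ i < n, s.get i = t.get i := by
  constructor
  · intro h i hi
    simpa [Stream'.getElem?_take hi] using congrArg (·[i]?) h
  · intro h
    exact List.ext_getElem (by simp) fun i hi _ => by simpa using h i (by simpa using hi)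

theorem Stream'.get_append_of_le {C : Type*} {l : List C} {s : Stream' C} {i : ℕ}
    (h : l.length ≤ i) : (l ++ₛ s).get i = s.get (i - l.length) := by
  obtain ⟨j, rfl⟩ := Nat.exists_eq_add_of_le h
  simp

theorem Stream'.get_take_append_const {C : Type*} (s : Stream' C) (n i : ℕ) (d : C) :
    (s.take n ++ₛ Stream'.const d).get i = if i < n then s.get i else d := by
  split_ifs with h
  · rw [Stream'.get_append_left _ _ _ (by simpa using h), Stream'.take_get]
  · rw [Stream'.get_append_of_le (by simpa using h), Stream'.get_const]

theorem Stream'.take_append_eq_take_append {C : Type*} (l : List C) {s t : Stream' C} {n : ℕ}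
    (h : s.take n = t.take n) : (l ++ₛ s).take n = (l ++ₛ t).take n := by
  rw [Stream'.take_eq_take_iff] at h ⊢
  intro i hi
  rcases lt_or_ge i l.length with hl | hl
  · rw [Stream'.get_append_left _ _ _ hl, Stream'.get_append_left _ _ _ hl]
  · rw [Stream'.get_append_of_le hl, Stream'.get_append_of_le hl, h _ (by omega)]

theorem Stream'.append_const_eq_getD {C : Type*} (w : List C) (d : C) :
    w ++ₛ Stream'.const d = fun i => w.getD i d := by
  ext i
  rcases lt_or_ge i w.length with h | h
  · rw [Stream'.get_append_left _ _ _ h]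
    exact (List.getD_eq_getElem _ _ h).symm
  · rw [Stream'.get_append_of_le h, Stream'.get_const]
    exact (List.getD_eq_default _ _ h).symm

theorem wordPrefix_eq_take {C : Type*} (x : ℕ → C) (n : ℕ) : wordPrefix x n = Stream'.take n x :=
  List.ext_getElem (by rw [wordPrefix, List.length_ofFn]; exact (Stream'.length_take n x).symm)
    fun i _ _ => (List.getElem_ofFn ..).trans (Stream'.take_get ..).symm

theorem getLast?_wordPrefix_succ {C : Type*} (x : ℕ → C) (n : ℕ) :
    (wordPrefix x (n + 1)).getLast? = some (x n) := by
  rw [wordPrefix, List.getLast?_eq_getElem?, List.getElem?_ofFn]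
  simp

theorem getD_wordPrefix {C : Type*} {x : ℕ → C} {n i : ℕ} (h : i < n) (d : C) :
    (wordPrefix x n).getD i d = x i := by
  simp [wordPrefix, h]

theorem mem_closure_iff_forall_take_eq {β : Type*} [TopologicalSpace β] [DiscreteTopology β]
    {S : Set (ℕ → β)} {x : ℕ → β} :
    x ∈ closure S ↔ ∀ n, ∃ y ∈ S, Stream'.take n y = Stream'.take n x := by
  simp only [(PiNat.isTopologicalBasis_cylinders fun _ => β).mem_closure_iff,
    Set.mem_ofPred_eq, forall_exists_index]
  constructor
  · intro h n
    obtain ⟨y, hyx, hyS⟩ := h _ x n rfl (PiNat.self_mem_cylinder x n)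
    exact ⟨y, hyS, Stream'.take_eq_take_iff.mpr hyx⟩
  · rintro h _ z n rfl hx
    obtain ⟨y, hyS, hyx⟩ := h n
    rw [← PiNat.mem_cylinder_iff_eq.mp hx]
    exact ⟨y, Stream'.take_eq_take_iff.mp hyx, hyS⟩

section infCat

variable {C : Type*} {b : ℕ → List C}

theorem cumCat_prefix_cumCat {n n' : ℕ} (h : n ≤ n') : cumCat b n <+: cumCat b n' := by
  induction h with
  | refl => exact List.prefix_refl _
  | step _ ih => exact ih.trans (List.prefix_append _ _)

theorem cumCat_succ_eq_append (n : ℕ) :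
    cumCat b (n + 1) = b 0 ++ cumCat (fun j => b (j + 1)) n := by
  induction n with
  | zero => simp [cumCat]
  | succ n ih => rw [cumCat, ih, cumCat, List.append_assoc]

theorem le_length_cumCat (hb : ∀ j, b j ≠ []) (n : ℕ) : n ≤ (cumCat b n).length := by
  induction n with
  | zero => exact Nat.zero_le _
  | succ n ih =>
    simp only [cumCat, List.length_append]
    have := List.length_pos_of_ne_nil (hb n)
    omega

theorem infCat_apply (hb : ∀ j, b j ≠ []) (d : C) {n i : ℕ} (hi : i < (cumCat b n).length) :
    infCat b d i = (cumCat b n)[i] := by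
  have hM (n' : ℕ) (h : n' ≤ max n (i + 1)) (hi : i < (cumCat b n').length) :
      (cumCat b n')[i] = (cumCat b (max n (i + 1)))[i]'(hi.trans_le
        (cumCat_prefix_cumCat h).length_le) :=
    (cumCat_prefix_cumCat h).getElem hi
  have hi₁ : i < (cumCat b (i + 1)).length := le_length_cumCat hb (i + 1)
  rw [infCat, List.getD_eq_getElem _ _ hi₁, hM n (le_max_left _ _) hi,
    hM (i + 1) (le_max_right _ _) hi₁]

theorem exists_infCat_eq_cumCat_append (hb : ∀ j, b j ≠ []) (d : C) (n : ℕ) :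
    ∃ s, infCat b d = cumCat b n ++ₛ s := by
  refine ⟨Stream'.drop (cumCat b n).length (infCat b d), ?_⟩
  nth_rw 1 [← Stream'.append_take_drop (cumCat b n).length (infCat b d)]
  congr 1
  refine List.ext_getElem (Stream'.length_take _ _) fun i _ hi => ?_
  exact (Stream'.take_get ..).trans (infCat_apply hb d hi)

theorem eq_infCat_of_forall_exists_cumCat_append (hb : ∀ j, b j ≠ []) (d : C) {x : Stream' C}
    (h : ∀ n, ∃ s, x = cumCat b n ++ₛ s) : x = infCat b d := by
  ext i
  obtain ⟨s, rfl⟩ := h (i + 1)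
  have hi : i < (cumCat b (i + 1)).length := le_length_cumCat hb (i + 1)
  rw [Stream'.get_append_left _ _ _ hi]
  exact (List.getD_eq_getElem _ _ hi).symm

theorem infCat_eq_append (hb : ∀ j, b j ≠ []) (d : C) :
    infCat b d = b 0 ++ₛ infCat (fun j => b (j + 1)) d := by
  refine (eq_infCat_of_forall_exists_cumCat_append hb d fun n => ?_).symm
  cases n with
  | zero => exact ⟨_, rfl⟩
  | succ n =>
    obtain ⟨s, hs⟩ := exists_infCat_eq_cumCat_append (fun j => hb (j + 1)) d n
    exact ⟨s, by rw [hs, cumCat_succ_eq_append, Stream'.append_append_stream]⟩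

end infCat

theorem exists_eq_infCat_of_forall_exists_append {C β : Type*} (blk : β → List C)
    (hblk : ∀ c, blk c ≠ []) (d : C) (P : Stream' C → Prop)
    (hP : ∀ x, P x → ∃ c x', P x' ∧ x = blk c ++ₛ x') {x : Stream' C} (hx : P x) :
    ∃ f : ℕ → β, x = infCat (fun n => blk (f n)) d := by
  have hstep (s : {x // P x}) : ∃ c, ∃ s' : {x // P x}, s.1 = blk c ++ₛ s'.1 := by
    obtain ⟨c, x', hx', h⟩ := hP s.1 s.2
    exact ⟨c, ⟨x', hx'⟩, h⟩
  choose c next hnext using hstep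
  let orbit (n : ℕ) : {x // P x} := next^[n] ⟨x, hx⟩
  refine ⟨fun n => c (orbit n),
    eq_infCat_of_forall_exists_cumCat_append (fun _ => hblk _) d fun n => ⟨(orbit n).1, ?_⟩⟩
  induction n with
  | zero => rfl
  | succ n ih =>
    rw [ih, hnext (orbit n), cumCat, Stream'.append_append_stream]
    simp only [orbit, Function.iterate_succ_apply']

section Hset

variable {α : Type*} {k m k' m' : ℕ} {a b a' b' : α}

theorem length_hSetBlock : (hSetBlock k m a b).length = 2 * k + 2 * m + 6 := by
  simp [hSetBlock]; omega

theorem hSetBlock_ne_nil : hSetBlock k m a b ≠ [] :=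
  List.ne_nil_of_length_pos (by rw [length_hSetBlock]; omega)

theorem getElem_hSetBlock {i : ℕ} (hi : i < (hSetBlock k m a b).length) :
    (hSetBlock k m a b)[i] =
      if i = 2 * k + 1 then Sum.inr 1
      else if i = 2 * k + 2 then Sum.inl a
      else if i = 2 * k + 2 * m + 5 then Sum.inl b
      else Sum.inr 0 := by
  rw [length_hSetBlock] at hi
  simp only [hSetBlock, List.getElem_append, List.getElem_replicate, List.length_append,
    List.length_replicate, List.length_cons, List.length_nil]
  split_ifs <;> first | omega | simp_all

theorem get_hSetBlock_append {s : Stream' (α ⊕ Fin 2)} {i : ℕ} (hi : i < 2 * k + 2 * m + 6) :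
    (hSetBlock k m a b ++ₛ s).get i =
      if i = 2 * k + 1 then Sum.inr 1
      else if i = 2 * k + 2 then Sum.inl a
      else if i = 2 * k + 2 * m + 5 then Sum.inl b
      else Sum.inr 0 := by
  rw [← length_hSetBlock (a := a) (b := b)] at hi
  rw [Stream'.get_append_left _ _ _ hi, getElem_hSetBlock]

theorem mem_Hset_iff {y : Stream' (α ⊕ Fin 2)} :
    y ∈ Hset α ↔
      ∃ k m a b, ∃ y' : Stream' (α ⊕ Fin 2), y' ∈ Hset α ∧ y = hSetBlock k m a b ++ₛ y' := by
  have hsplit (f : ℕ → ℕ × ℕ × α × α) :=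
    infCat_eq_append (b := fun n => hSetBlock (f n).1 (f n).2.1 (f n).2.2.1 (f n).2.2.2)
      (fun _ => hSetBlock_ne_nil) (Sum.inr 0)
  constructor
  · rintro ⟨f, rfl⟩
    exact ⟨_, _, _, _, _, ⟨fun n => f (n + 1), rfl⟩, hsplit f⟩
  · rintro ⟨k, m, a, b, _, ⟨f, rfl⟩, rfl⟩
    exact ⟨Stream'.cons (k, m, a, b) f, (hsplit (Stream'.cons (k, m, a, b) f)).symm⟩

theorem length_hSetBlock_le {s : Stream' (α ⊕ Fin 2)} {i₁ i₂ i₃ : ℕ} (h₁₂ : i₁ < i₂)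
    (h₂₃ : i₂ < i₃) (h₁ : (hSetBlock k m a b ++ₛ s).get i₁ ≠ Sum.inr 0)
    (h₂ : (hSetBlock k m a b ++ₛ s).get i₂ ≠ Sum.inr 0)
    (h₃ : (hSetBlock k m a b ++ₛ s).get i₃ ≠ Sum.inr 0) :
    (hSetBlock k m a b).length ≤ i₃ + 1 := by
  rw [length_hSetBlock]
  by_contra! h
  rw [get_hSetBlock_append (by omega)] at h₁ h₂ h₃
  split_ifs at h₁ h₂ h₃ <;> first | omega | simp at *

theorem hSetBlock_eq_of_append_eq_append {s s' : Stream' (α ⊕ Fin 2)}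
    (h : hSetBlock k m a b ++ₛ s = hSetBlock k' m' a' b' ++ₛ s') :
    hSetBlock k m a b = hSetBlock k' m' a' b' := by
  wlog hle : (hSetBlock k m a b).length ≤ (hSetBlock k' m' a' b').length generalizing k m a b
    k' m' a' b' s s'
  · exact (this h.symm (by omega)).symm
  have hne (i : ℕ) (hi : i = 2 * k + 1 ∨ i = 2 * k + 2 ∨ i = 2 * k + 2 * m + 5) :
      (hSetBlock k' m' a' b' ++ₛ s').get i ≠ Sum.inr 0 := by
    rw [← h, get_hSetBlock_append (by omega)]
    split_ifs <;> first | omega | simp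
  refine Stream'.append_left_injective _ _ _ _ h (le_antisymm hle ?_)
  have := length_hSetBlock_le (by omega : 2 * k + 1 < 2 * k + 2)
    (by omega : 2 * k + 2 < 2 * k + 2 * m + 5) (hne _ (by omega)) (hne _ (by omega))
    (hne _ (by omega))
  simp only [length_hSetBlock] at this ⊢
  omega

theorem eq_hSetBlock_append_drop {x s : Stream' (α ⊕ Fin 2)} {n i₁ i₂ i₃ : ℕ} (h₁₂ : i₁ < i₂)
    (h₂₃ : i₂ < i₃) (h₃n : i₃ < n) (h₁ : x.get i₁ ≠ Sum.inr 0) (h₂ : x.get i₂ ≠ Sum.inr 0)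
    (h₃ : x.get i₃ ≠ Sum.inr 0) (h : (hSetBlock k m a b ++ₛ s).take n = x.take n) :
    x = hSetBlock k m a b ++ₛ x.drop (hSetBlock k m a b).length := by
  have hget := Stream'.take_eq_take_iff.mp h
  have hlen := length_hSetBlock_le h₁₂ h₂₃ (by rwa [hget _ (by omega)])
    (by rwa [hget _ (by omega)]) (by rwa [hget _ (by omega)])
  have htake : x.take (hSetBlock k m a b).length = hSetBlock k m a b :=
    calc x.take (hSetBlock k m a b).length
        = (hSetBlock k m a b ++ₛ s).take (hSetBlock k m a b).length :=
          Stream'.take_eq_take_iff.mpr fun i hi => (hget i (by omega)).symm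
      _ = hSetBlock k m a b := by
          rw [Stream'.take_append_of_le_length _ _ _ le_rfl, List.take_length]
  nth_rw 1 [← Stream'.append_take_drop (hSetBlock k m a b).length x, htake]

theorem exists_hSetBlock_append_take_eq {s : Stream' (α ⊕ Fin 2)} {p : ℕ}
    (hp : p < 2 * k + 2 * m + 6) (hzero : (hSetBlock k m a b ++ₛ s).get p = Sum.inr 0) (N : ℕ) :
    ∃ k' m', (hSetBlock k' m' a b ++ₛ s).take N =
      ((hSetBlock k m a b ++ₛ s).take (p + 1) ++ₛ Stream'.const (Sum.inr 0)).take N := by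
  rw [get_hSetBlock_append hp] at hzero
  have hp_pos : p ≠ 2 * k + 1 ∧ p ≠ 2 * k + 2 ∧ p ≠ 2 * k + 2 * m + 5 := by
    split_ifs at hzero <;> simp_all
  -- stretch the run of `0`s containing position `p`: the odd run if `p ≤ 2k`, else the even one
  obtain ⟨k', m', hstretch⟩ : ∃ k' m',
      k' = k + N ∧ m' = m ∧ p ≤ 2 * k ∨ k' = k ∧ m' = m + N ∧ 2 * k < p := by
    rcases le_or_gt p (2 * k) with h | h
    exacts [⟨_, _, .inl ⟨rfl, rfl, h⟩⟩, ⟨_, _, .inr ⟨rfl, rfl, h⟩⟩]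
  refine ⟨k', m', Stream'.take_eq_take_iff.mpr fun i hi => ?_⟩
  rw [get_hSetBlock_append (by omega), Stream'.get_take_append_const]
  by_cases hip : i < p + 1
  · rw [if_pos hip, get_hSetBlock_append (by omega)]
    split_ifs <;> first | rfl | omega
  · rw [if_neg hip]
    split_ifs <;> first | rfl | omega

theorem exists_mem_Hset_take_eq {y : Stream' (α ⊕ Fin 2)} (hy : y ∈ Hset α) {p : ℕ}
    (hp : y.get p = Sum.inr 0) (N : ℕ) :
    ∃ z : Stream' (α ⊕ Fin 2), z ∈ Hset α ∧
      z.take N = (y.take (p + 1) ++ₛ Stream'.const (Sum.inr 0)).take N := by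
  induction p using Nat.strong_induction_on generalizing y with
  | _ p ih =>
  obtain ⟨k, m, a, b, y', hy', rfl⟩ := mem_Hset_iff.mp hy
  by_cases hpB : p < 2 * k + 2 * m + 6
  · obtain ⟨k', m', h⟩ := exists_hSetBlock_append_take_eq hpB hp N
    exact ⟨_, mem_Hset_iff.mpr ⟨k', m', a, b, y', hy', rfl⟩, h⟩
  · have hL : (hSetBlock k m a b).length = 2 * k + 2 * m + 6 := length_hSetBlock
    rw [Stream'.get_append_of_le (by omega)] at hp
    obtain ⟨z', hz', h⟩ := ih _ (by omega) hy' hp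
    refine ⟨_, mem_Hset_iff.mpr ⟨k, m, a, b, z', hz', rfl⟩, ?_⟩
    have hsplit : (hSetBlock k m a b ++ₛ y').take (p + 1) =
        hSetBlock k m a b ++ y'.take (p - (hSetBlock k m a b).length + 1) := by
      rw [Stream'.append_take]
      congr 1
      omega
    rw [hsplit, Stream'.append_append_stream]
    exact Stream'.take_append_eq_take_append _ h

variable [TopologicalSpace α] [DiscreteTopology α]

theorem exists_hSetBlock_append_of_mem_closure {x : Stream' (α ⊕ Fin 2)}
    (hx : x ∈ closure (Hset α)) (hfreq : ∃ᶠ i in atTop, x.get i ≠ Sum.inr 0) :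
    ∃ k m a b, ∃ x' : Stream' (α ⊕ Fin 2),
      (x' ∈ closure (Hset α) ∧ ∃ᶠ i in atTop, x'.get i ≠ Sum.inr 0) ∧
        x = hSetBlock k m a b ++ₛ x' := by
  obtain ⟨i₁, -, h₁⟩ := frequently_atTop'.mp hfreq 0
  obtain ⟨i₂, h₁₂, h₂⟩ := frequently_atTop'.mp hfreq i₁
  obtain ⟨i₃, h₂₃, h₃⟩ := frequently_atTop'.mp hfreq i₂
  have hblock (n : ℕ) (hn : i₃ < n) : ∃ k m a b, ∃ y : Stream' (α ⊕ Fin 2), y ∈ Hset α ∧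
      x = hSetBlock k m a b ++ₛ x.drop (hSetBlock k m a b).length ∧
      (hSetBlock k m a b ++ₛ y).take n = x.take n := by
    obtain ⟨y, hy, hyx⟩ := mem_closure_iff_forall_take_eq.mp hx n
    obtain ⟨k, m, a, b, y', hy', rfl⟩ := mem_Hset_iff.mp hy
    exact ⟨k, m, a, b, y', hy', eq_hSetBlock_append_drop h₁₂ h₂₃ hn h₁ h₂ h₃ hyx, hyx⟩
  obtain ⟨k, m, a, b, -, -, hxB, -⟩ := hblock (i₃ + 1) (by omega)
  set L := (hSetBlock k m a b).length
  refine ⟨k, m, a, b, x.drop L, ⟨?_, ?_⟩, hxB⟩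
  · refine mem_closure_iff_forall_take_eq.mpr fun N => ?_
    obtain ⟨k', m', a', b', z, hz, hxB', hzx⟩ := hblock (L + N + i₃ + 1) (by omega)
    rw [hSetBlock_eq_of_append_eq_append (hxB'.symm.trans hxB), Stream'.take_eq_take_iff]
      at hzx
    refine ⟨z, hz, Stream'.take_eq_take_iff.mpr fun i hi => ?_⟩
    have := hzx (L + i) (by omega)
    rwa [Stream'.get_append_right, ← Stream'.get_drop] at this
  · rw [← map_add_atTop_eq_nat L, frequently_map] at hfreq
    simpa [Stream'.get_drop, add_comm] using hfreq

theorem mem_Hset_of_mem_closure {x : Stream' (α ⊕ Fin 2)} (hx : x ∈ closure (Hset α))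
    (hfreq : ∃ᶠ i in atTop, x.get i ≠ Sum.inr 0) : x ∈ Hset α := by
  refine exists_eq_infCat_of_forall_exists_append
    (fun c : ℕ × ℕ × α × α => hSetBlock c.1 c.2.1 c.2.2.1 c.2.2.2) (fun _ => hSetBlock_ne_nil)
    (Sum.inr 0) (fun x => x ∈ closure (Hset α) ∧ ∃ᶠ i in atTop, x.get i ≠ Sum.inr 0)
    ?_ ⟨hx, hfreq⟩
  rintro x ⟨hx, hfreq⟩
  obtain ⟨k, m, a, b, x', hx', rfl⟩ := exists_hSetBlock_append_of_mem_closure hx hfreq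
  exact ⟨(k, m, a, b), x', hx', rfl⟩

theorem mem_VZeroOmega_of_mem_closure {x : ℕ → α ⊕ Fin 2} (hx : x ∈ closure (Hset α))
    (hzero : ∀ᶠ i in atTop, x i = Sum.inr 0) : x ∈ VZeroOmega α := by
  obtain ⟨N, hN⟩ := eventually_atTop.mp hzero
  obtain ⟨y, hy, hyx⟩ := mem_closure_iff_forall_take_eq.mp hx (N + 1)
  refine ⟨wordPrefix x (N + 1), ⟨⟨y, hy, N + 1, ?_⟩, ?_⟩, funext fun i => ?_⟩
  · rw [wordPrefix_eq_take, wordPrefix_eq_take, hyx]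
  · rw [getLast?_wordPrefix_succ, hN N le_rfl]
  · rcases lt_or_ge i (N + 1) with h | h
    · rw [getD_wordPrefix h]
    · rw [List.getD_eq_default _ _ (by simpa [wordPrefix] using h)]
      exact hN i (by omega)

theorem VZeroOmega_subset_closure : VZeroOmega α ⊆ closure (Hset α) := by
  rintro _ ⟨w, ⟨⟨y, hy, n, rfl⟩, hlast⟩, rfl⟩
  obtain ⟨p, rfl⟩ : ∃ p, n = p + 1 :=
    Nat.exists_eq_succ_of_ne_zero (by rintro rfl; simp [wordPrefix] at hlast)
  rw [getLast?_wordPrefix_succ, Option.some_inj] at hlast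
  rw [wordPrefix_eq_take, ← Stream'.append_const_eq_getD]
  exact mem_closure_iff_forall_take_eq.mpr fun N => exists_mem_Hset_take_eq hy hlast N

end Hset

theorem closure_Hset_general {α : Type*}
    [TopologicalSpace α] [DiscreteTopology α] :
    closure (Hset α) = Hset α ∪ VZeroOmega α := by
  refine subset_antisymm (fun x hx => ?_)
    (Set.union_subset subset_closure VZeroOmega_subset_closure)
  by_cases hzero : ∀ᶠ i in atTop, x i = Sum.inr 0
  · exact Or.inr (mem_VZeroOmega_of_mem_closure hx hzero)
  · exact Or.inl (mem_Hset_of_mem_closure hx (not_eventually.mp hzero))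

/-- The topological closure of `H` is `Cl(H) = H ∪ V·0^ω`. -/
theorem closure_Hset {α : Type*} [Fintype α]
    [TopologicalSpace α] [DiscreteTopology α] :
    closure (Hset α) = Hset α ∪ VZeroOmega α :=
  closure_Hset_general
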